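/- Let J be an operator ideal in B(H) such that J² ≠ J. Then the real linear span of D_J^{sa} is a proper subset of J^{sa}: Span_ℝ(D_J^{sa}) ≠ J^{sa}. -/

import Mathlib

open Filter Topology
open scoped InnerProductSpace

noncomputable section

variable {H : Type*} [NormedAddCommGroup H] [InnerProductSpace ℂ H] [CompleteSpace H]

/-- A (two-sided) operator ideal of `B(H)`. -/
def IsOpIdeal (J : Set (H →L[ℂ] H)) : Prop :=
  (0 : H →L[ℂ] H) ∈ J ∧
  (∀ A B : H →L[ℂ] H, A ∈ J → B ∈ J → A + B ∈ J) ∧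
  (∀ A B : H →L[ℂ] H, B ∈ J → A * B ∈ J) ∧
  (∀ A B : H →L[ℂ] H, A ∈ J → A * B ∈ J)

/-- A proper operator ideal: `{0} ≠ J ≠ B(H)`. -/
def IsProperOpIdeal (J : Set (H →L[ℂ] H)) : Prop :=
  IsOpIdeal J ∧ J ≠ {0} ∧ J ≠ Set.univ

/-- Orthogonal (self-adjoint, idempotent) projection. -/
def IsOrthogonalProjection (P : H →L[ℂ] H) : Prop :=
  IsSelfAdjoint P ∧ P * P = P

/-- Diagonal with respect to the fixed orthonormal basis `e`. -/
def IsDiagonalOp (e : HilbertBasis ℕ ℂ H) (A : H →L[ℂ] H) : Prop :=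
  ∀ m n : ℕ, m ≠ n → ⟪A (e m), e n⟫_ℂ = 0

def IsDiagonalProjection (e : HilbertBasis ℕ ℂ H) (P : H →L[ℂ] H) : Prop :=
  IsOrthogonalProjection P ∧ IsDiagonalOp e P

/-- Membership in the restricted unitary group `U_J(H) = U(H) ∩ (I + J)`. -/
def InRestrictedUnitary (J : Set (H →L[ℂ] H)) (U : H →L[ℂ] H) : Prop :=
  U ∈ unitary (H →L[ℂ] H) ∧ U - 1 ∈ J

/-- `A` is `U_J(H)`-diagonalizable with respect to `e`. -/
def RestrictedDiagonalizable (e : HilbertBasis ℕ ℂ H) (J : Set (H →L[ℂ] H))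
    (A : H →L[ℂ] H) : Prop :=
  ∃ U : H →L[ℂ] H, InRestrictedUnitary J U ∧ IsDiagonalOp e (U * A * star U)

/-- Convergence of the partial sums of the series `∑ T n` to `S` in the weak operator
topology. -/
def WOTSum (T : ℕ → H →L[ℂ] H) (S : H →L[ℂ] H) : Prop :=
  ∀ x y : H, Tendsto (fun N : ℕ => ∑ n ∈ Finset.range N, ⟪T n x, y⟫_ℂ)
    atTop (nhds ⟪S x, y⟫_ℂ)

/-- Decomposition of the identity: mutually orthogonal self-adjoint projections summing
to the identity in the strong operator topology. -/
def IsDecompositionOfIdentity (P : ℕ → H →L[ℂ] H) : Prop :=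
  (∀ n, IsOrthogonalProjection (P n)) ∧ (∀ m n, m ≠ n → P m * P n = 0) ∧
  (∀ x : H, HasSum (fun n => P n x) x)

/-- `A` is diagonalizable with infinite point spectrum, distinct eigenvalues `lam` and
spectral projections `P`. -/
def SpectralDataOf (A : H →L[ℂ] H) (lam : ℕ → ℂ) (P : ℕ → H →L[ℂ] H) : Prop :=
  IsDecompositionOfIdentity P ∧ (∀ n, P n ≠ 0) ∧ Function.Injective lam ∧
  (∀ x : H, HasSum (fun n => lam n • P n x) (A x))

/-- Finite rank operator. -/
def IsFiniteRankOp (T : H →L[ℂ] H) : Prop :=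
  FiniteDimensional ℂ (LinearMap.range (T : H →ₗ[ℂ] H))

/-- The `n`-th approximation number (= `(n+1)`-th singular value for compact operators). -/
noncomputable def sNum (T : H →L[ℂ] H) (n : ℕ) : ℝ :=
  sInf {c : ℝ | ∃ F : H →L[ℂ] H, IsFiniteRankOp F ∧
    Module.finrank ℂ (LinearMap.range (F : H →ₗ[ℂ] H)) ≤ n ∧ c = ‖T - F‖}

/-- The arithmetic mean closure `J^{-am}` of an operator ideal. -/
def amClosure (J : Set (H →L[ℂ] H)) : Set (H →L[ℂ] H) :=
  {A | IsCompactOperator ⇑A ∧ ∃ B ∈ J, ∃ M : ℝ, 0 < M ∧ ∀ n : ℕ,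
    (∑ k ∈ Finset.range (n + 1), sNum A k) ≤ M * (∑ k ∈ Finset.range (n + 1), sNum B k)}

/-- `(P, Q)` is a Fredholm pair of projections with essential codimension `[P : Q] = 0`. -/
def EssCodimZero (P Q : H →L[ℂ] H) : Prop :=
  IsClosed (⇑Q '' (LinearMap.range (P : H →ₗ[ℂ] H) : Set H)) ∧
  FiniteDimensional ℂ
    ↥(LinearMap.ker (Q : H →ₗ[ℂ] H) ⊓ LinearMap.range (P : H →ₗ[ℂ] H)) ∧
  FiniteDimensional ℂ
    ↥(LinearMap.range (Q : H →ₗ[ℂ] H) ⊓ LinearMap.ker (P : H →ₗ[ℂ] H)) ∧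
  Module.finrank ℂ
    ↥(LinearMap.ker (Q : H →ₗ[ℂ] H) ⊓ LinearMap.range (P : H →ₗ[ℂ] H)) =
  Module.finrank ℂ
    ↥(LinearMap.range (Q : H →ₗ[ℂ] H) ⊓ LinearMap.ker (P : H →ₗ[ℂ] H))

/-- Hilbert–Schmidt operator. -/
def IsHilbertSchmidt (T : H →L[ℂ] H) : Prop :=
  ∀ b : HilbertBasis ℕ ℂ H, Summable (fun n => ‖T (b n)‖ ^ 2)

/-- Partial isometry: isometric on the orthogonal complement of its kernel. -/
def IsPartialIsometryOp (V : H →L[ℂ] H) : Prop :=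
  ∀ x ∈ (LinearMap.ker (V : H →ₗ[ℂ] H))ᗮ, ‖V x‖ = ‖x‖


/-- The operator ideal `J² = Span{AB : A, B ∈ J}`. -/
def opIdealSq (J : Set (H →L[ℂ] H)) : Set (H →L[ℂ] H) :=
  (Submodule.span ℂ {C : H →L[ℂ] H | ∃ A ∈ J, ∃ B ∈ J, C = A * B} :
    Submodule ℂ (H →L[ℂ] H))

/-- The self-adjoint part of `D_J`:
`D_J^{sa} = { V D V* : D = D* ∈ D ∩ J, V ∈ U_J(H) }`. -/
def restrictedDiagSA (e : HilbertBasis ℕ ℂ H) (J : Set (H →L[ℂ] H)) :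
    Set (H →L[ℂ] H) :=
  {X | ∃ D V : H →L[ℂ] H, IsDiagonalOp e D ∧ D ∈ J ∧ IsSelfAdjoint D ∧
    InRestrictedUnitary J V ∧ X = V * D * star V}

/-!
Pick `A ∈ J \ J²` and isometries `V`, `W` onto the closed spans of the even and of the odd basis
vectors. Then `T = W A V* + V A* W*` lies in `J^{sa}`, using that operator ideals are self-adjoint.
The compression `X ↦ W* X V` kills every diagonal operator, so it maps
`U D U* = D + D (U* - 1) + (U - 1) D U*` into `J²` and hence all of `Span_ℝ D_J^{sa}` into `J²`.
But it sends `T` to `A`.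
-/

section Polar

variable {𝕜 E F G : Type*} [RCLike 𝕜]
  [NormedAddCommGroup E] [InnerProductSpace 𝕜 E]
  [NormedAddCommGroup F] [InnerProductSpace 𝕜 F] [CompleteSpace F]
  [NormedAddCommGroup G] [InnerProductSpace 𝕜 G] [CompleteSpace G]

/-- `U` is the partial isometry extending `S x ↦ A x` from the range of `S` to its closure and
vanishing on the orthogonal complement. -/
theorem ContinuousLinearMap.exists_comp_eq_and_adjoint_comp_eq {S : E →L[𝕜] F} {A : E →L[𝕜] G}
    (h : ∀ x y, ⟪S x, S y⟫_𝕜 = ⟪A x, A y⟫_𝕜) :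
    ∃ U : F →L[𝕜] G, U ∘L S = A ∧ adjoint U ∘L A = S := by
  set K := (LinearMap.range (S : E →ₗ[𝕜] F)).topologicalClosure
  have hSK : ∀ x, S x ∈ K := fun x => Submodule.le_topologicalClosure _ ⟨x, rfl⟩
  set ι : E →ₗ[𝕜] K := (S : E →ₗ[𝕜] F).codRestrict K hSK
  have hdense : DenseRange ι := by
    refine Subtype.dense_iff.2 fun k hk => ?_
    rw [← Set.range_comp]
    exact hk
  have hnorm : ∀ x, ‖A x‖ = ‖ι x‖ := fun x => by
    rw [@norm_eq_sqrt_re_inner 𝕜, @norm_eq_sqrt_re_inner 𝕜 _ _ _ _ (ι x), ← h]; rfl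
  set U₀ : K →L[𝕜] G := (A : E →ₗ[𝕜] G).extendOfNorm ι
  have hU₀ : ∀ x, U₀ (ι x) = A x :=
    LinearMap.extendOfNorm_eq hdense ⟨1, fun x => (hnorm x).trans_le (one_mul _).ge⟩
  have hinner : ∀ x (k : K), ⟪A x, U₀ k⟫_𝕜 = ⟪S x, (k : F)⟫_𝕜 := fun x =>
    hdense.induction (fun _ ⟨z, hz⟩ => hz ▸ by rw [hU₀]; exact (h x z).symm)
      (isClosed_eq (by fun_prop) (by fun_prop))
  refine ⟨U₀ ∘L K.orthogonalProjectionOnto, ?_, ?_⟩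
  · ext x
    exact (congrArg U₀ (K.orthogonalProjectionOnto_mem_subspace_eq_self ⟨S x, hSK x⟩)).trans
      (hU₀ x)
  · ext x
    refine ext_inner_right 𝕜 fun y => ?_
    rw [comp_apply, adjoint_inner_left, comp_apply, hinner]
    exact Submodule.inner_orthogonalProjectionOnto_eq_of_mem_left ⟨S x, hSK x⟩ y

end Polar

namespace HilbertBasis

variable {ι 𝕜 E F : Type*} [RCLike 𝕜]
  [NormedAddCommGroup E] [InnerProductSpace 𝕜 E]
  [NormedAddCommGroup F] [InnerProductSpace 𝕜 F] [CompleteSpace F]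

theorem exists_linearIsometry_apply_eq (b : HilbertBasis ι 𝕜 E) {v : ι → F}
    (hv : Orthonormal 𝕜 v) : ∃ V : E →ₗᵢ[𝕜] F, ∀ i, V (b i) = v i := by
  classical
  exact ⟨hv.orthogonalFamily.linearIsometry.comp b.repr.toLinearIsometry, fun i => by
    simp [b.repr_self, OrthogonalFamily.linearIsometry_apply_single]⟩

theorem continuousLinearMap_eq_zero_of_inner (b : HilbertBasis ι 𝕜 E) {X : E →L[𝕜] E}
    (h : ∀ i j, ⟪b j, X (b i)⟫_𝕜 = 0) : X = 0 := by
  refine ContinuousLinearMap.ext_on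
    (Submodule.dense_iff_topologicalClosure_eq_top.2 b.dense_span) fun _ ⟨i, hi⟩ => hi ▸ ?_
  refine b.repr.injective (lp.ext (funext fun j => ?_))
  simp [b.repr_apply_apply, h]

end HilbertBasis

section Ideal

variable {E : Type*} [NormedAddCommGroup E] [InnerProductSpace ℂ E] {J : Set (E →L[ℂ] E)}

namespace IsOpIdeal

theorem mul_mem_left (hJ : IsOpIdeal J) (A : E →L[ℂ] E) {B : E →L[ℂ] E} (hB : B ∈ J) :
    A * B ∈ J :=
  hJ.2.2.1 A B hB

theorem mul_mem_right (hJ : IsOpIdeal J) {A : E →L[ℂ] E} (hA : A ∈ J) (B : E →L[ℂ] E) :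
    A * B ∈ J :=
  hJ.2.2.2 A B hA

def toSubmodule (hJ : IsOpIdeal J) : Submodule ℂ (E →L[ℂ] E) where
  carrier := J
  add_mem' := hJ.2.1 _ _
  zero_mem' := hJ.1
  smul_mem' c X hX := by simpa using hJ.mul_mem_left (c • 1) hX

end IsOpIdeal

theorem mul_mem_opIdealSq {A B : E →L[ℂ] E} (hA : A ∈ J) (hB : B ∈ J) :
    A * B ∈ opIdealSq J :=
  Submodule.subset_span ⟨A, hA, B, hB, rfl⟩

theorem opIdealSq_subset (hJ : IsOpIdeal J) : opIdealSq J ⊆ J :=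
  (Submodule.span_le (p := hJ.toSubmodule)).2 fun _ ⟨_, hA, B, _, hC⟩ =>
    hC ▸ hJ.mul_mem_right hA B

theorem isDiagonalOp_one (e : HilbertBasis ℕ ℂ E) : IsDiagonalOp e 1 :=
  fun _ _ hmn => e.orthonormal.2 hmn

end Ideal

variable {J : Set (H →L[ℂ] H)}

theorem inner_map_map_eq_inner_star_mul_apply (S : H →L[ℂ] H) (x y : H) :
    ⟪S x, S y⟫_ℂ = ⟪x, (star S * S) y⟫_ℂ :=
  (ContinuousLinearMap.adjoint_inner_right S x (S y)).symm

/-- Operator ideals are self-adjoint: by polar decomposition `A = U |A|` and `|A| = U* A`,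
so `A* = U* A U*`. -/
theorem IsOpIdeal.star_mem (hJ : IsOpIdeal J) {A : H →L[ℂ] H} (hA : A ∈ J) : star A ∈ J := by
  have habs : IsSelfAdjoint (CFC.abs A) := (CFC.abs_nonneg A).isSelfAdjoint
  obtain ⟨U, hUS, hUA⟩ := ContinuousLinearMap.exists_comp_eq_and_adjoint_comp_eq
    (S := CFC.abs A) (A := A) fun x y => by
      rw [inner_map_map_eq_inner_star_mul_apply, inner_map_map_eq_inner_star_mul_apply,
        habs.star_eq, CFC.abs_mul_abs]
  have hstar : star A = star U * A * star U := by
    calc star A = star (U * CFC.abs A) := congrArg star hUS.symm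
      _ = CFC.abs A * star U := by rw [star_mul, habs.star_eq]
      _ = star U * A * star U := congrArg (· * star U) hUA.symm
  exact hstar ▸ hJ.mul_mem_right (hJ.mul_mem_left _ hA) _

theorem InRestrictedUnitary.star_sub_one_mem (hJ : IsOpIdeal J) {U : H →L[ℂ] H}
    (hU : InRestrictedUnitary J U) : star U - 1 ∈ J := by
  have h : star U - 1 = -star U * (U - 1) := by
    rw [neg_mul, mul_sub, mul_one, Unitary.star_mul_self_of_mem hU.1, neg_sub]
  exact h ▸ hJ.mul_mem_left _ hU.2

variable (e : HilbertBasis ℕ ℂ H)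

theorem mul_mul_mem_opIdealSq_of_mem_restrictedDiagSA (hJ : IsOpIdeal J) {Y Z : H →L[ℂ] H}
    (hYZ : ∀ D, IsDiagonalOp e D → Y * D * Z = 0) {X : H →L[ℂ] H}
    (hX : X ∈ restrictedDiagSA e J) : Y * X * Z ∈ opIdealSq J := by
  obtain ⟨D, U, hD, hDJ, -, hU, rfl⟩ := hX
  have hsplit : Y * (U * D * star U) * Z =
      Y * D * Z + (Y * D) * ((star U - 1) * Z) + (Y * (U - 1)) * (D * star U * Z) := by
    noncomm_ring
  rw [hsplit, hYZ D hD, zero_add]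
  exact Submodule.add_mem _
    (mul_mem_opIdealSq (hJ.mul_mem_left Y hDJ) (hJ.mul_mem_right (hU.star_sub_one_mem hJ) Z))
    (mul_mem_opIdealSq (hJ.mul_mem_left Y hU.2) (hJ.mul_mem_right (hJ.mul_mem_right hDJ _) Z))

theorem mul_mul_mem_opIdealSq_of_mem_span_restrictedDiagSA (hJ : IsOpIdeal J)
    {Y Z : H →L[ℂ] H} (hYZ : ∀ D, IsDiagonalOp e D → Y * D * Z = 0) {T : H →L[ℂ] H}
    (hT : T ∈ Submodule.span ℝ (restrictedDiagSA e J)) : Y * T * Z ∈ opIdealSq J := by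
  have hle : Submodule.span ℝ (restrictedDiagSA e J) ≤
      ((Submodule.span ℂ {C : H →L[ℂ] H | ∃ A ∈ J, ∃ B ∈ J, C = A * B}).restrictScalars ℝ).comap
        (LinearMap.mulLeftRight ℝ (Y, Z)) :=
    Submodule.span_le.2 fun _ hX => mul_mul_mem_opIdealSq_of_mem_restrictedDiagSA e hJ hYZ hX
  exact hle hT

/-- With `V e n = e (2n)` and `W e n = e (2n + 1)`, the corner `W* D V` of a diagonal `D` only
sees the entries `⟪D e (2m), e (2n + 1)⟫ = 0`. -/
theorem exists_isometries_star_mul_diagonal_mul_eq_zero :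
    ∃ V W : H →L[ℂ] H, star V * V = 1 ∧ star W * W = 1 ∧
      ∀ D, IsDiagonalOp e D → star W * D * V = 0 := by
  obtain ⟨V, hV⟩ := e.exists_linearIsometry_apply_eq
    (e.orthonormal.comp (2 * ·) fun _ _ h => by simpa using h)
  obtain ⟨W, hW⟩ := e.exists_linearIsometry_apply_eq
    (e.orthonormal.comp (2 * · + 1) fun _ _ h => by simpa using h)
  refine ⟨V.toContinuousLinearMap, W.toContinuousLinearMap,
    (ContinuousLinearMap.isometry_iff_adjoint_comp_self _).1 V.isometry,
    (ContinuousLinearMap.isometry_iff_adjoint_comp_self _).1 W.isometry,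
    fun D hD => e.continuousLinearMap_eq_zero_of_inner fun m n => ?_⟩
  rw [mul_apply_eq_comp, mul_apply_eq_comp, ContinuousLinearMap.star_eq_adjoint,
    ContinuousLinearMap.adjoint_inner_right]
  simp only [LinearIsometry.coe_toContinuousLinearMap, hV, hW, Function.comp_apply]
  exact inner_eq_zero_symm.1 (hD _ _ (by omega))

/-- Theorem: `Span_ℝ(D_J^{sa}) ≠ J^{sa}` when `J² ≠ J`. -/
theorem span_restrictedDiagSA_ne_selfAdjointPart
    (e : HilbertBasis ℕ ℂ H) (J : Set (H →L[ℂ] H)) (hJ : IsOpIdeal J)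
    (hsq : opIdealSq J ≠ J) :
    (Submodule.span ℝ (restrictedDiagSA e J) : Set (H →L[ℂ] H)) ≠
      {T : H →L[ℂ] H | T ∈ J ∧ IsSelfAdjoint T} := by
  intro hspan
  obtain ⟨A, hAJ, hA⟩ : ∃ A ∈ J, A ∉ opIdealSq J := by
    by_contra! h
    exact hsq ((opIdealSq_subset hJ).antisymm h)
  obtain ⟨V, W, hV, hW, hWDV⟩ := exists_isometries_star_mul_diagonal_mul_eq_zero e
  have hWV : star W * V = 0 := by simpa using hWDV 1 (isDiagonalOp_one e)
  set B := W * A * star V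
  have hBJ : B ∈ J := hJ.mul_mem_right (hJ.mul_mem_left W hAJ) _
  have hT : B + star B ∈ Submodule.span ℝ (restrictedDiagSA e J) := by
    rw [← SetLike.mem_coe, hspan]
    exact ⟨hJ.toSubmodule.add_mem hBJ (hJ.star_mem hBJ), IsSelfAdjoint.add_star_self B⟩
  have hcorner : star W * (B + star B) * V = A := by
    calc star W * (B + star B) * V
        = (star W * W) * A * (star V * V) + (star W * V) * star A * (star W * V) := by
          simp only [B, star_mul, star_star]; noncomm_ring
      _ = A := by rw [hV, hW, hWV]; simp
  exact hA (hcorner ▸ mul_mul_mem_opIdealSq_of_mem_span_restrictedDiagSA e hJ hWDV hT)
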